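/- arXiv:1212.6765 — 5 statements merged into one kernel-verified Lean document; each statement's English description precedes it below -/
import Mathlib

section
/- Let Γ be a group acting by homeomorphisms on a nonempty compact metrizable topological space X. If there exists a Γ-invariant mean on the Borel subsets of X (i.e. m(γ·B) = m(B) for every γ ∈ Γ and Borel B ⊆ X), then there exists a Γ-invariant Borel probability measure on X. -/
/-!
The outer regularization `λ K = inf {m U | U open, K ⊆ U}` of the mean is a content on the
compact sets: it is monotone and subadditive, and additive on disjoint compact sets because
these have disjoint open neighbourhoods. The Borel measure induced by `λ` has mass
`λ X = m X = 1`. Each `γ` acts by a homeomorphism, which permutes the open neighbourhoods of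
`K` and `γ • K` and preserves `m` on them, so `λ`, and hence the measure, is `Γ`-invariant.
-/

open MeasureTheory

/-- A mean on the Borel subsets of a topological space `Z`: a finitely additive
function from the Borel σ-algebra to `[0,1]` with total mass `1`. -/
def IsBorelMean {Z : Type*} [TopologicalSpace Z] (m : Set Z → ℝ) : Prop :=
  (∀ B, MeasurableSet[borel Z] B → 0 ≤ m B ∧ m B ≤ 1) ∧
  m Set.univ = 1 ∧
  ∀ A B, MeasurableSet[borel Z] A → MeasurableSet[borel Z] B → Disjoint A B →
    m (A ∪ B) = m A + m B

open Set TopologicalSpace NNReal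

namespace MeasureTheory.Content

variable {G : Type*} [TopologicalSpace G] [R1Space G] [MeasurableSpace G] [BorelSpace G]
  (μ : Content G)

theorem measure_univ_of_compactSpace [CompactSpace G] :
    μ.measure univ = μ ⟨univ, isCompact_univ⟩ := by
  rw [μ.measure_apply MeasurableSet.univ, μ.outerMeasure_of_isOpen univ isOpen_univ,
    μ.innerContent_of_isCompact isCompact_univ isOpen_univ]

theorem measure_preimage (f : G ≃ₜ G) (h : ∀ ⦃K : Compacts G⦄, μ (K.map f f.continuous) = μ K)
    {A : Set G} (hA : MeasurableSet A) : μ.measure (f ⁻¹' A) = μ.measure A := by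
  rw [μ.measure_apply (hA.preimage f.measurable), μ.measure_apply hA,
    μ.outerMeasure_preimage f h]

end MeasureTheory.Content

theorem IsOpen.measurableSet_borel {X : Type*} [TopologicalSpace X] {U : Set X}
    (hU : IsOpen U) : MeasurableSet[borel X] U :=
  MeasurableSpace.measurableSet_generateFrom hU

namespace IsBorelMean

variable {X : Type*} [TopologicalSpace X] {m : Set X → ℝ} {A B : Set X}

theorem nonneg (hm : IsBorelMean m) (hA : MeasurableSet[borel X] A) : 0 ≤ m A :=
  (hm.1 A hA).1

theorem mono (hm : IsBorelMean m) (hA : MeasurableSet[borel X] A)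
    (hB : MeasurableSet[borel X] B) (hAB : A ⊆ B) : m A ≤ m B := by
  have := hm.2.2 A (B \ A) hA (hB.diff hA) disjoint_sdiff_self_right
  rw [union_sdiff_cancel hAB] at this
  linarith [hm.nonneg (hB.diff hA)]

theorem union_le (hm : IsBorelMean m) (hA : MeasurableSet[borel X] A)
    (hB : MeasurableSet[borel X] B) : m (A ∪ B) ≤ m A + m B := by
  have := hm.2.2 A (B \ A) hA (hB.diff hA) disjoint_sdiff_self_right
  rw [union_sdiff_self] at this
  linarith [hm.mono (hB.diff hA) hB sdiff_subset]

end IsBorelMean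

section MeanContent

variable {X : Type*} [TopologicalSpace X] {m : Set X → ℝ}

noncomputable def meanContentFn (m : Set X → ℝ) (K : Set X) : ℝ≥0 :=
  ⨅ U : {U : Set X // IsOpen U ∧ K ⊆ U}, (m U).toNNReal

instance (K : Set X) : Nonempty {U : Set X // IsOpen U ∧ K ⊆ U} :=
  ⟨⟨univ, isOpen_univ, subset_univ K⟩⟩

theorem meanContentFn_le {U K : Set X} (hU : IsOpen U) (hKU : K ⊆ U) :
    meanContentFn m K ≤ (m U).toNNReal :=
  ciInf_le (OrderBot.bddBelow _) (⟨U, hU, hKU⟩ : {U : Set X // IsOpen U ∧ K ⊆ U})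

theorem le_meanContentFn {K : Set X} {c : ℝ≥0}
    (h : ∀ U, IsOpen U → K ⊆ U → c ≤ (m U).toNNReal) : c ≤ meanContentFn m K :=
  le_ciInf fun U => h U U.2.1 U.2.2

theorem meanContentFn_mono {K₁ K₂ : Set X} (h : K₁ ⊆ K₂) :
    meanContentFn m K₁ ≤ meanContentFn m K₂ :=
  le_meanContentFn fun _ hU hKU => meanContentFn_le hU (h.trans hKU)

theorem meanContentFn_of_isOpen (hm : IsBorelMean m) {U : Set X} (hU : IsOpen U) :
    meanContentFn m U = (m U).toNNReal :=
  (meanContentFn_le hU subset_rfl).antisymm <| le_meanContentFn fun _ hV hUV =>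
    Real.toNNReal_le_toNNReal <| hm.mono hU.measurableSet_borel hV.measurableSet_borel hUV

theorem meanContentFn_union_le (hm : IsBorelMean m) (K₁ K₂ : Set X) :
    meanContentFn m (K₁ ∪ K₂) ≤ meanContentFn m K₁ + meanContentFn m K₂ := by
  refine NNReal.le_iInf_add_iInf fun U V => ?_
  have hU := U.2.1.measurableSet_borel
  have hV := V.2.1.measurableSet_borel
  calc meanContentFn m (K₁ ∪ K₂) ≤ (m (U ∪ V)).toNNReal :=
        meanContentFn_le (U.2.1.union V.2.1) (union_subset_union U.2.2 V.2.2)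
    _ ≤ (m U + m V).toNNReal := Real.toNNReal_le_toNNReal (hm.union_le hU hV)
    _ = (m U).toNNReal + (m V).toNNReal := Real.toNNReal_add (hm.nonneg hU) (hm.nonneg hV)

/-- Disjoint compact sets have disjoint open neighbourhoods, on which the mean is additive. -/
theorem meanContentFn_union_of_disjoint [T2Space X] (hm : IsBorelMean m) {K₁ K₂ : Set X}
    (hK₁ : IsCompact K₁) (hK₂ : IsCompact K₂) (hd : Disjoint K₁ K₂) :
    meanContentFn m (K₁ ∪ K₂) = meanContentFn m K₁ + meanContentFn m K₂ := by
  refine (meanContentFn_union_le hm K₁ K₂).antisymm <| le_meanContentFn fun U hU hKU => ?_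
  obtain ⟨V₁, V₂, hV₁, hV₂, hKV₁, hKV₂, hVd⟩ := SeparatedNhds.of_isCompact_isCompact hK₁ hK₂ hd
  have hUV₁ := (hU.inter hV₁).measurableSet_borel
  have hUV₂ := (hU.inter hV₂).measurableSet_borel
  calc meanContentFn m K₁ + meanContentFn m K₂
      ≤ (m (U ∩ V₁)).toNNReal + (m (U ∩ V₂)).toNNReal := add_le_add
        (meanContentFn_le (hU.inter hV₁) (subset_inter (subset_union_left.trans hKU) hKV₁))
        (meanContentFn_le (hU.inter hV₂) (subset_inter (subset_union_right.trans hKU) hKV₂))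
    _ = (m ((U ∩ V₁) ∪ (U ∩ V₂))).toNNReal := by
        rw [hm.2.2 _ _ hUV₁ hUV₂ (hVd.mono inter_subset_right inter_subset_right),
          Real.toNNReal_add (hm.nonneg hUV₁) (hm.nonneg hUV₂)]
    _ ≤ (m U).toNNReal := Real.toNNReal_le_toNNReal <|
        hm.mono (hUV₁.union hUV₂) hU.measurableSet_borel
          (union_subset inter_subset_left inter_subset_left)

theorem meanContentFn_image (f : X ≃ₜ X) (hf : ∀ U, IsOpen U → m (f '' U) = m U) (K : Set X) :
    meanContentFn m (f '' K) = meanContentFn m K := by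
  refine le_antisymm (le_meanContentFn fun U hU hKU => ?_) (le_meanContentFn fun V hV hKV => ?_)
  · rw [← hf U hU]
    exact meanContentFn_le (f.isOpenMap U hU) (image_mono hKU)
  · rw [← image_preimage_eq V f.surjective, hf _ (hV.preimage f.continuous)]
    exact meanContentFn_le (hV.preimage f.continuous) (image_subset_iff.mp hKV)

noncomputable def meanContent [T2Space X] (hm : IsBorelMean m) : Content X where
  toFun K := meanContentFn m K
  mono' _ _ h := meanContentFn_mono h
  sup_disjoint' K₁ K₂ hd _ _ := meanContentFn_union_of_disjoint hm K₁.2 K₂.2 hd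
  sup_le' K₁ K₂ := meanContentFn_union_le hm K₁ K₂

theorem meanContent_apply [T2Space X] (hm : IsBorelMean m) (K : Compacts X) :
    meanContent hm K = meanContentFn m K :=
  rfl

end MeanContent

theorem statement4_general (Γ : Type*) [Group Γ] (X : Type*) [TopologicalSpace X] [CompactSpace X]
    [TopologicalSpace.MetrizableSpace X] [MeasurableSpace X] [BorelSpace X]
    [MulAction Γ X] (hcont : ∀ γ : Γ, Continuous fun x : X => γ • x)
    (m : Set X → ℝ) (hmean : IsBorelMean m)
    (hinv : ∀ (γ : Γ) (B : Set X), MeasurableSet B → m ((fun x => γ • x) '' B) = m B) :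
    ∃ μ : Measure X, IsProbabilityMeasure μ ∧
      ∀ (γ : Γ) (B : Set X), MeasurableSet B → μ ((fun x => γ • x) '' B) = μ B := by
  have : ContinuousConstSMul Γ X := ⟨hcont⟩
  refine ⟨(meanContent hmean).measure, ⟨?_⟩, fun γ B hB => ?_⟩
  · rw [Content.measure_univ_of_compactSpace, meanContent_apply]
    simp [meanContentFn_of_isOpen hmean isOpen_univ, hmean.2.1]
  · have hγ : ∀ U, IsOpen U → m (Homeomorph.smul γ⁻¹ '' U) = m U := fun U hU =>
      hinv γ⁻¹ U hU.measurableSet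
    rw [image_smul, ← preimage_smul_inv]
    exact (meanContent hmean).measure_preimage (Homeomorph.smul γ⁻¹)
      (fun K => by rw [meanContent_apply, meanContent_apply, Compacts.coe_map,
        meanContentFn_image _ hγ]) hB

theorem statement4 (Γ : Type*) [Group Γ] (X : Type*) [TopologicalSpace X] [CompactSpace X]
    [TopologicalSpace.MetrizableSpace X] [Nonempty X] [MeasurableSpace X] [BorelSpace X]
    [MulAction Γ X] (hcont : ∀ γ : Γ, Continuous fun x : X => γ • x)
    (m : Set X → ℝ) (hmean : IsBorelMean m)
    (hinv : ∀ (γ : Γ) (B : Set X), MeasurableSet B → m ((fun x => γ • x) '' B) = m B) :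
    ∃ μ : Measure X, IsProbabilityMeasure μ ∧
      ∀ (γ : Γ) (B : Set X), MeasurableSet B → μ ((fun x => γ • x) '' B) = μ B :=
  statement4_general Γ X hcont m hmean hinv
end

section
/- Let n ≥ 1, let Γ be a finitely generated group and ρ : Γ → GL_n(ℝ) a linear representation. Equip G = ℝ^n ⋊_ρ Γ with the word length |·|_S associated to a compact symmetric generating set S containing the identity. Then the set Exp_Γ(ℝ^n) of all exponentially distorted vectors v ∈ ℝ^n is an ℝ-linear subspace of ℝ^n, and it is invariant under ρ(γ) for every γ ∈ Γ. -/
/-!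
Statement 5: for a finitely generated group `Γ` and `ρ : Γ → GL_n(ℝ)`, the set of
exponentially distorted vectors of `ℝ^n` in `G = ℝ^n ⋊_ρ Γ` (word length taken with respect
to a compact symmetric generating set containing the identity) is an `ℝ`-linear subspace
of `ℝ^n`, invariant under every `ρ(γ)`.
-/

open Matrix Pointwise

noncomputable section

/-- The automorphism of `Multiplicative ℝ^n` given by a matrix in `GL_n(ℝ)`. -/
def glAut {n : ℕ} (A : GL (Fin n) ℝ) :
    MulAut (Multiplicative (Fin n → ℝ)) :=
  AddEquiv.toMultiplicative
    { toFun := fun v => (A : Matrix (Fin n) (Fin n) ℝ).mulVec v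
      invFun := fun v => ((A⁻¹ : GL (Fin n) ℝ) : Matrix (Fin n) (Fin n) ℝ).mulVec v
      left_inv := fun v => by
        show ((A⁻¹ : GL (Fin n) ℝ) : Matrix (Fin n) (Fin n) ℝ).mulVec
          ((A : Matrix (Fin n) (Fin n) ℝ).mulVec v) = v
        rw [Matrix.mulVec_mulVec, ← Units.val_mul, inv_mul_cancel, Units.val_one,
          Matrix.one_mulVec]
      right_inv := fun v => by
        show ((A : GL (Fin n) ℝ) : Matrix (Fin n) (Fin n) ℝ).mulVec
          (((A⁻¹ : GL (Fin n) ℝ) : Matrix (Fin n) (Fin n) ℝ).mulVec v) = v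
        rw [Matrix.mulVec_mulVec, ← Units.val_mul, mul_inv_cancel, Units.val_one,
          Matrix.one_mulVec]
      map_add' := fun v w => by simp [Matrix.mulVec_add] }

/-- The action of `GL_n(ℝ)` on `Multiplicative ℝ^n`, as a homomorphism to the
automorphism group. -/
def glHom {n : ℕ} : GL (Fin n) ℝ →* MulAut (Multiplicative (Fin n → ℝ)) where
  toFun := glAut
  map_one' := by
    apply DFunLike.ext
    intro v
    show ((1 : GL (Fin n) ℝ) : Matrix (Fin n) (Fin n) ℝ).mulVec v = v
    simp
    exact Matrix.one_mulVec _
  map_mul' := fun A B => by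
    apply DFunLike.ext
    intro v
    show ((A * B : GL (Fin n) ℝ) : Matrix (Fin n) (Fin n) ℝ).mulVec v
      = (A : Matrix (Fin n) (Fin n) ℝ).mulVec ((B : Matrix (Fin n) (Fin n) ℝ).mulVec v)
    simp [Matrix.mulVec_mulVec]
    exact (Matrix.mulVec_mulVec _ _ _).symm

/-- Product topology on a semidirect product. -/
instance semidirectTopology {N H : Type*} [Group N] [Group H] [TopologicalSpace N]
    [TopologicalSpace H] {φ : H →* MulAut N} : TopologicalSpace (N ⋊[φ] H) :=
  TopologicalSpace.induced (fun g => (g.left, g.right)) inferInstance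

/-- Word length with respect to a generating set `S`. -/
def wordLength {G : Type*} [Group G] (S : Set G) (g : G) : ℕ :=
  sInf {m : ℕ | g ∈ S ^ m}


/-- `v` is exponentially distorted in `ℝ^n ⋊_ρ Γ`: the word length of `m·v` grows at most
logarithmically in `m`. -/
def ExpDistorted {n : ℕ} {Γ : Type*} [Group Γ] (ρ : Γ →* GL (Fin n) ℝ)
    (S : Set (Multiplicative (Fin n → ℝ) ⋊[glHom.comp ρ] Γ)) (v : Fin n → ℝ) : Prop :=
  ∃ C : ℝ, 0 < C ∧ ∀ m : ℕ, 2 ≤ m →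
    (wordLength S (SemidirectProduct.inl (Multiplicative.ofAdd (m • v))) : ℝ) ≤
      C * Real.log m

/-!
Word length is subadditive, so `m • (v + w)` costs at most the cost of `m • v` plus that of
`m • w`, and conjugating by `γ` changes it by at most `2 |γ|`, which gives `ρ`-invariance.
Scalar multiples require passing from integer to real multiples of `v`: the closed sets `S ^ m`
cover the line `ℝ • v`, so by Baire one of them contains a segment of it. Hence word length is
bounded on `t • v` for small `|t|`, and, since `|g ^ k| ≤ k |g|`, also for `|t| ≤ 1`. So the word
length of `t • v` is at most `C log (|t| + 1) + D` for all real `t`, a bound that survives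
rescaling `t` by `c`.
-/

section WordLength

variable {G : Type*} [Group G] {S : Set G}

theorem wordLength_le_of_mem_pow {g : G} {m : ℕ} (h : g ∈ S ^ m) : wordLength S g ≤ m :=
  Nat.sInf_le h

theorem mem_pow_wordLength (hgen : ∀ g : G, ∃ m : ℕ, g ∈ S ^ m) (g : G) :
    g ∈ S ^ wordLength S g :=
  Nat.sInf_mem (hgen g)

theorem wordLength_one : wordLength S (1 : G) = 0 :=
  Nat.le_zero.mp (wordLength_le_of_mem_pow (by rw [pow_zero]; rfl))

theorem wordLength_mul_le (hgen : ∀ g : G, ∃ m : ℕ, g ∈ S ^ m) (g h : G) :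
    wordLength S (g * h) ≤ wordLength S g + wordLength S h :=
  wordLength_le_of_mem_pow <| pow_add S _ _ ▸
    Set.mul_mem_mul (mem_pow_wordLength hgen g) (mem_pow_wordLength hgen h)

theorem wordLength_inv_le (hgen : ∀ g : G, ∃ m : ℕ, g ∈ S ^ m) (hsymm : S⁻¹ = S) (g : G) :
    wordLength S g⁻¹ ≤ wordLength S g := by
  have h : g⁻¹ ∈ (S ^ wordLength S g)⁻¹ := Set.inv_mem_inv.2 (mem_pow_wordLength hgen g)
  rw [← inv_pow, hsymm] at h
  exact wordLength_le_of_mem_pow h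

theorem wordLength_pow_le (hgen : ∀ g : G, ∃ m : ℕ, g ∈ S ^ m) (g : G) (k : ℕ) :
    wordLength S (g ^ k) ≤ k * wordLength S g := by
  induction k with
  | zero => simp [wordLength_one]
  | succ k ih =>
    rw [pow_succ, add_one_mul]
    exact (wordLength_mul_le hgen _ _).trans (Nat.add_le_add_right ih _)

theorem wordLength_conj_le (hgen : ∀ g : G, ∃ m : ℕ, g ∈ S ^ m) (hsymm : S⁻¹ = S) (g h : G) :
    wordLength S (g * h * g⁻¹) ≤ wordLength S h + 2 * wordLength S g := by
  have := (wordLength_mul_le hgen (g * h) g⁻¹).trans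
    (Nat.add_le_add (wordLength_mul_le hgen g h) (wordLength_inv_le hgen hsymm g))
  omega

end WordLength

theorem IsCompact.isClosed_pow {M : Type*} [Monoid M] [TopologicalSpace M] [ContinuousMul M]
    [T2Space M] {S : Set M} (hS : IsCompact S) (m : ℕ) : IsClosed (S ^ m) := by
  suffices IsCompact (S ^ m) from this.isClosed
  induction m with
  | zero => rw [pow_zero]; exact isCompact_singleton
  | succ k ih => rw [pow_succ]; exact ih.mul hS

namespace AddChar

variable {G : Type*} [Group G] {S : Set G} (χ : AddChar ℝ G)

theorem exists_wordLength_le_of_abs_lt [TopologicalSpace G] (hχ : Continuous χ)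
    (hclosed : ∀ m : ℕ, IsClosed (S ^ m)) (hgen : ∀ g : G, ∃ m : ℕ, g ∈ S ^ m)
    (hsymm : S⁻¹ = S) : ∃ ε > 0, ∃ B : ℕ, ∀ s : ℝ, |s| < ε → wordLength S (χ s) ≤ B := by
  obtain ⟨m, t₀, ht₀⟩ := nonempty_interior_of_iUnion_of_closed
    (f := fun m : ℕ => χ ⁻¹' (S ^ m)) (fun m => (hclosed m).preimage hχ)
    (Set.eq_univ_iff_forall.2 fun t => Set.mem_iUnion.2 (hgen (χ t)))
  obtain ⟨ε, hε, hball⟩ := Metric.mem_nhds_iff.1 (mem_interior_iff_mem_nhds.1 ht₀)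
  have hmem : ∀ s : ℝ, |s| < ε → χ (t₀ + s) ∈ S ^ m := fun s hs =>
    hball (by simpa [Real.dist_eq] using hs)
  refine ⟨ε, hε, m + m, fun s hs => ?_⟩
  have hdiff : χ s = χ (t₀ + s) * (χ (t₀ + 0))⁻¹ := by
    rw [← map_neg_eq_inv, ← map_add_eq_mul]
    ring_nf
  rw [hdiff]
  exact (wordLength_mul_le hgen _ _).trans <| Nat.add_le_add
    (wordLength_le_of_mem_pow (hmem s hs))
    ((wordLength_inv_le hgen hsymm _).trans
      (wordLength_le_of_mem_pow (hmem 0 (by simpa using hε))))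

theorem exists_wordLength_le_of_abs_le_one [TopologicalSpace G] (hχ : Continuous χ)
    (hclosed : ∀ m : ℕ, IsClosed (S ^ m)) (hgen : ∀ g : G, ∃ m : ℕ, g ∈ S ^ m)
    (hsymm : S⁻¹ = S) : ∃ B : ℕ, ∀ t : ℝ, |t| ≤ 1 → wordLength S (χ t) ≤ B := by
  obtain ⟨ε, hε, B, hB⟩ := χ.exists_wordLength_le_of_abs_lt hχ hclosed hgen hsymm
  obtain ⟨k, hk⟩ := exists_nat_gt (1 / ε)
  have hk₀ : (0 : ℝ) < k := lt_trans (by positivity) hk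
  refine ⟨k * B, fun t ht => ?_⟩
  have hsmall : |t / k| < ε := by
    rw [div_lt_iff₀ hε] at hk
    rw [abs_div, Nat.abs_cast, div_lt_iff₀ hk₀]
    nlinarith
  have hpow : χ t = χ (t / k) ^ k := by
    rw [← map_nsmul_eq_pow, nsmul_eq_mul, mul_div_cancel₀ _ hk₀.ne']
  rw [hpow]
  exact (wordLength_pow_le hgen _ k).trans (Nat.mul_le_mul_left k (hB _ hsmall))

theorem wordLength_le_floor_add (hgen : ∀ g : G, ∃ m : ℕ, g ∈ S ^ m) (hsymm : S⁻¹ = S)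
    {B : ℕ} (hB : ∀ t : ℝ, |t| ≤ 1 → wordLength S (χ t) ≤ B) (t : ℝ) :
    wordLength S (χ t) ≤ wordLength S (χ ⌊|t|⌋₊) + B := by
  have habs : wordLength S (χ t) ≤ wordLength S (χ |t|) := by
    rcases abs_cases t with ⟨h, -⟩ | ⟨h, -⟩
    · rw [h]
    · rw [h, ← neg_neg t, map_neg_eq_inv, neg_neg]
      exact wordLength_inv_le hgen hsymm _
  have hsplit : χ |t| = χ ⌊|t|⌋₊ * χ (|t| - ⌊|t|⌋₊) := by
    rw [← map_add_eq_mul, add_sub_cancel]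
  have hfrac : |(|t| - ⌊|t|⌋₊)| ≤ 1 := by
    rw [abs_le]
    constructor <;> linarith [Nat.floor_le (abs_nonneg t), Nat.lt_floor_add_one |t|]
  calc wordLength S (χ t) ≤ wordLength S (χ |t|) := habs
    _ ≤ wordLength S (χ ⌊|t|⌋₊) + wordLength S (χ (|t| - ⌊|t|⌋₊)) :=
      hsplit ▸ wordLength_mul_le hgen _ _
    _ ≤ wordLength S (χ ⌊|t|⌋₊) + B := Nat.add_le_add_left (hB _ hfrac) _

end AddChar

namespace SemidirectProduct

section Topology

variable {N H : Type*} [Group N] [Group H] [TopologicalSpace N] [TopologicalSpace H]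
  {φ : H →* MulAut N}

theorem continuous_toProd : Continuous fun g : N ⋊[φ] H => (g.left, g.right) :=
  continuous_induced_dom

theorem continuous_left : Continuous fun g : N ⋊[φ] H => g.left :=
  continuous_fst.comp continuous_toProd

theorem continuous_right : Continuous fun g : N ⋊[φ] H => g.right :=
  continuous_snd.comp continuous_toProd

instance [T2Space N] [T2Space H] : T2Space (N ⋊[φ] H) :=
  T2Space.of_injective_continuous
    (fun _ _ h => SemidirectProduct.ext (congrArg Prod.fst h) (congrArg Prod.snd h))
    continuous_toProd

theorem continuousMul [ContinuousMul N] [DiscreteTopology H] (hφ : ∀ h : H, Continuous (φ h)) :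
    ContinuousMul (N ⋊[φ] H) := by
  have hact : Continuous fun p : H × N => φ p.1 p.2 := continuous_prod_of_discrete_left.2 hφ
  refine ⟨continuous_induced_rng.2 (Continuous.prodMk ?_ ?_)⟩
  · exact (continuous_left.comp continuous_fst).mul (hact.comp
      ((continuous_right.comp continuous_fst).prodMk (continuous_left.comp continuous_snd)))
  · exact (continuous_of_discreteTopology (f := fun p : H × H => p.1 * p.2)).comp
      ((continuous_right.comp continuous_fst).prodMk (continuous_right.comp continuous_snd))

end Topology

variable {E H : Type*} [AddCommGroup E] [Module ℝ E] [Group H]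
  {φ : H →* MulAut (Multiplicative E)}

variable (φ) in
def lineChar (v : E) : AddChar ℝ (Multiplicative E ⋊[φ] H) where
  toFun t := inl (Multiplicative.ofAdd (t • v))
  map_zero_eq_one' := by rw [zero_smul, ofAdd_zero, map_one]
  map_add_eq_mul' s t := by rw [add_smul, ofAdd_add, map_mul]

theorem lineChar_apply (v : E) (t : ℝ) :
    lineChar φ v t = inl (Multiplicative.ofAdd (t • v)) :=
  rfl

theorem lineChar_add (v w : E) (t : ℝ) :
    lineChar φ (v + w) t = lineChar φ v t * lineChar φ w t := by
  rw [lineChar_apply, lineChar_apply, lineChar_apply, smul_add, ofAdd_add, map_mul]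

theorem continuous_lineChar [TopologicalSpace E] [ContinuousSMul ℝ E] [TopologicalSpace H]
    (v : E) : Continuous (lineChar φ v) :=
  continuous_induced_rng.2 <|
    (show Continuous fun t : ℝ => t • v from continuous_id.smul continuous_const).prodMk
      continuous_const

end SemidirectProduct

open SemidirectProduct

theorem continuous_glAut {n : ℕ} (A : GL (Fin n) ℝ) : Continuous (glAut A) :=
  show Continuous fun v : Fin n → ℝ => (A : Matrix (Fin n) (Fin n) ℝ) *ᵥ v from
    continuous_const.matrix_mulVec continuous_id

theorem lineChar_mulVec {n : ℕ} {Γ : Type*} [Group Γ] (ρ : Γ →* GL (Fin n) ℝ) (γ : Γ)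
    (v : Fin n → ℝ) (t : ℝ) :
    lineChar (glHom.comp ρ) ((ρ γ : Matrix (Fin n) (Fin n) ℝ) *ᵥ v) t =
      inr γ * lineChar (glHom.comp ρ) v t * (inr γ)⁻¹ := by
  rw [lineChar_apply, lineChar_apply, ← map_inv, ← inl_aut, ← Matrix.mulVec_smul]
  rfl

namespace ExpDistorted

variable {n : ℕ} {Γ : Type*} [Group Γ] {ρ : Γ →* GL (Fin n) ℝ}
  {S : Set (Multiplicative (Fin n → ℝ) ⋊[glHom.comp ρ] Γ)} {v w : Fin n → ℝ}

theorem iff_lineChar : ExpDistorted ρ S v ↔ ∃ C : ℝ, 0 < C ∧ ∀ m : ℕ, 2 ≤ m →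
    (wordLength S (lineChar (glHom.comp ρ) v m) : ℝ) ≤ C * Real.log m := by
  simp only [ExpDistorted, lineChar_apply, Nat.cast_smul_eq_nsmul]

theorem of_le_log_add (C D : ℝ) (h : ∀ m : ℕ, 2 ≤ m →
    (wordLength S (lineChar (glHom.comp ρ) v m) : ℝ) ≤ C * Real.log m + D) :
    ExpDistorted ρ S v := by
  have hlog2 : 0 < Real.log 2 := Real.log_pos one_lt_two
  refine iff_lineChar.2 ⟨|C| + |D| / Real.log 2 + 1, by positivity, fun m hm => ?_⟩
  have hlogm : Real.log 2 ≤ Real.log m := Real.log_le_log two_pos (by exact_mod_cast hm)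
  have hC : C * Real.log m ≤ |C| * Real.log m :=
    mul_le_mul_of_nonneg_right (le_abs_self C) (hlog2.le.trans hlogm)
  have hD : D ≤ |D| / Real.log 2 * Real.log m := by
    rw [div_mul_eq_mul_div, le_div_iff₀ hlog2]
    nlinarith [le_abs_self D, abs_nonneg D]
  nlinarith [h m hm]

theorem zero : ExpDistorted ρ S 0 :=
  of_le_log_add 0 0 fun m _ => by
    simp [lineChar_apply, wordLength_one]

theorem add (hgen : ∀ g : Multiplicative (Fin n → ℝ) ⋊[glHom.comp ρ] Γ, ∃ m : ℕ, g ∈ S ^ m)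
    (hv : ExpDistorted ρ S v) (hw : ExpDistorted ρ S w) : ExpDistorted ρ S (v + w) := by
  obtain ⟨C₁, -, h₁⟩ := iff_lineChar.1 hv
  obtain ⟨C₂, -, h₂⟩ := iff_lineChar.1 hw
  refine of_le_log_add (C₁ + C₂) 0 fun m hm => ?_
  have hsum : (wordLength S (lineChar (glHom.comp ρ) (v + w) m) : ℝ) ≤
      wordLength S (lineChar (glHom.comp ρ) v m) + wordLength S (lineChar (glHom.comp ρ) w m) := by
    rw [lineChar_add]
    exact_mod_cast wordLength_mul_le hgen _ _
  linarith [h₁ m hm, h₂ m hm]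

theorem mulVec (hgen : ∀ g : Multiplicative (Fin n → ℝ) ⋊[glHom.comp ρ] Γ, ∃ m : ℕ, g ∈ S ^ m)
    (hsymm : S⁻¹ = S) (γ : Γ) (hv : ExpDistorted ρ S v) :
    ExpDistorted ρ S ((ρ γ : Matrix (Fin n) (Fin n) ℝ) *ᵥ v) := by
  obtain ⟨C, -, h⟩ := iff_lineChar.1 hv
  refine of_le_log_add C (2 * wordLength S (inr γ)) fun m hm => ?_
  have hconj : (wordLength S (lineChar (glHom.comp ρ) ((ρ γ : Matrix _ _ ℝ) *ᵥ v) m) : ℝ) ≤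
      wordLength S (lineChar (glHom.comp ρ) v m) + 2 * wordLength S (inr γ) := by
    rw [lineChar_mulVec]
    exact_mod_cast wordLength_conj_le hgen hsymm _ _
  linarith [h m hm]

theorem exists_wordLength_le_log [TopologicalSpace Γ] (hclosed : ∀ m : ℕ, IsClosed (S ^ m))
    (hgen : ∀ g : Multiplicative (Fin n → ℝ) ⋊[glHom.comp ρ] Γ, ∃ m : ℕ, g ∈ S ^ m)
    (hsymm : S⁻¹ = S) (hv : ExpDistorted ρ S v) :
    ∃ C D : ℝ, 0 ≤ C ∧ ∀ t : ℝ,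
      (wordLength S (lineChar (glHom.comp ρ) v t) : ℝ) ≤ C * Real.log (|t| + 1) + D := by
  obtain ⟨C, hC, h⟩ := iff_lineChar.1 hv
  obtain ⟨B, hB⟩ := (lineChar (glHom.comp ρ) v).exists_wordLength_le_of_abs_le_one
    (continuous_lineChar v) hclosed hgen hsymm
  refine ⟨C, 2 * B, hC.le, fun t => ?_⟩
  set k := ⌊|t|⌋₊
  have hlog_nonneg : 0 ≤ C * Real.log (|t| + 1) :=
    mul_nonneg hC.le (Real.log_nonneg (by linarith [abs_nonneg t]))
  have hk : (wordLength S (lineChar (glHom.comp ρ) v k) : ℝ) ≤ C * Real.log (|t| + 1) + B := by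
    by_cases hk2 : 2 ≤ k
    · have hk₀ : (0 : ℝ) < k := by exact_mod_cast (by omega : 0 < k)
      have hlog : Real.log k ≤ Real.log (|t| + 1) :=
        Real.log_le_log hk₀ (by linarith [Nat.floor_le (abs_nonneg t)])
      nlinarith [h k hk2, (Nat.cast_nonneg B : (0 : ℝ) ≤ B)]
    · have hB' := hB k (by rw [Nat.abs_cast]; exact_mod_cast (by omega : k ≤ 1))
      have : (wordLength S (lineChar (glHom.comp ρ) v k) : ℝ) ≤ B := by exact_mod_cast hB'
      linarith
  have hfloor : (wordLength S (lineChar (glHom.comp ρ) v t) : ℝ) ≤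
      wordLength S (lineChar (glHom.comp ρ) v k) + B := by
    exact_mod_cast (lineChar (glHom.comp ρ) v).wordLength_le_floor_add hgen hsymm hB t
  linarith

theorem smul [TopologicalSpace Γ] (hclosed : ∀ m : ℕ, IsClosed (S ^ m))
    (hgen : ∀ g : Multiplicative (Fin n → ℝ) ⋊[glHom.comp ρ] Γ, ∃ m : ℕ, g ∈ S ^ m)
    (hsymm : S⁻¹ = S) (c : ℝ) (hv : ExpDistorted ρ S v) : ExpDistorted ρ S (c • v) := by
  obtain ⟨C, D, hC, h⟩ := hv.exists_wordLength_le_log hclosed hgen hsymm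
  refine of_le_log_add C (C * Real.log (|c| + 1) + D) fun m hm => ?_
  have hm₁ : (1 : ℝ) ≤ m := by exact_mod_cast (by omega : 1 ≤ m)
  have hlog : Real.log (|m * c| + 1) ≤ Real.log m + Real.log (|c| + 1) := by
    rw [← Real.log_mul (by positivity) (by positivity)]
    refine Real.log_le_log (by positivity) ?_
    rw [abs_mul, Nat.abs_cast]
    nlinarith [abs_nonneg c]
  have hrescale : lineChar (glHom.comp ρ) (c • v) m = lineChar (glHom.comp ρ) v (m * c) := by
    rw [lineChar_apply, lineChar_apply, mul_smul]
  rw [hrescale]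
  nlinarith [h (m * c), mul_le_mul_of_nonneg_left hlog hC]

end ExpDistorted

theorem statement5_general (n : ℕ) (Γ : Type*) [Group Γ] [TopologicalSpace Γ]
    [DiscreteTopology Γ] (ρ : Γ →* GL (Fin n) ℝ)
    (S : Set (Multiplicative (Fin n → ℝ) ⋊[glHom.comp ρ] Γ))
    (hSsymm : S⁻¹ = S) (hScompact : IsCompact S)
    (hSgen : ∀ g : Multiplicative (Fin n → ℝ) ⋊[glHom.comp ρ] Γ, ∃ m : ℕ, g ∈ S ^ m) :
    ∃ W : Submodule ℝ (Fin n → ℝ),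
      (W : Set (Fin n → ℝ)) = {v : Fin n → ℝ | ExpDistorted ρ S v} ∧
      ∀ (γ : Γ) (v : Fin n → ℝ), v ∈ W →
        (ρ γ : Matrix (Fin n) (Fin n) ℝ).mulVec v ∈ W := by
  have := SemidirectProduct.continuousMul (φ := glHom.comp ρ) fun γ => continuous_glAut (ρ γ)
  have hclosed := hScompact.isClosed_pow
  refine ⟨{ carrier := {v | ExpDistorted ρ S v}
            zero_mem' := ExpDistorted.zero
            add_mem' := fun hv hw => hv.add hSgen hw
            smul_mem' := fun c _ hv => hv.smul hclosed hSgen hSsymm c },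
    rfl, fun γ _ hv => hv.mulVec hSgen hSsymm γ⟩

theorem statement5 (n : ℕ) (hn : 1 ≤ n) (Γ : Type*) [Group Γ] [TopologicalSpace Γ]
    [DiscreteTopology Γ] (hΓ : Group.FG Γ) (ρ : Γ →* GL (Fin n) ℝ)
    (S : Set (Multiplicative (Fin n → ℝ) ⋊[glHom.comp ρ] Γ))
    (hS1 : (1 : Multiplicative (Fin n → ℝ) ⋊[glHom.comp ρ] Γ) ∈ S)
    (hSsymm : S⁻¹ = S) (hScompact : IsCompact S)
    (hSgen : ∀ g : Multiplicative (Fin n → ℝ) ⋊[glHom.comp ρ] Γ, ∃ m : ℕ, g ∈ S ^ m) :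
    ∃ W : Submodule ℝ (Fin n → ℝ),
      (W : Set (Fin n → ℝ)) = {v : Fin n → ℝ | ExpDistorted ρ S v} ∧
      ∀ (γ : Γ) (v : Fin n → ℝ), v ∈ W →
        (ρ γ : Matrix (Fin n) (Fin n) ℝ).mulVec v ∈ W :=
  statement5_general n Γ ρ S hSsymm hScompact hSgen

end
end

section
/- Let Γ be a group acting by graph automorphisms on a connected, locally finite graph X (so Γ acts by isometries on the vertex set of X with its graph distance d_X), and acting by isometries on a metric space (Y, d_Y). Then the diagonal action of Γ on the product of the vertex set of X and Y is metrically proper (i.e. for every vertex x, every y ∈ Y and every r > 0, the set {g ∈ Γ : d_X(g·x, x) + d_Y(g·y, y) ≤ r} is finite) if and only if there exists a vertex x of X whose stabilizer Γ_x acts metrically properly on Y (i.e. for every y ∈ Y and r > 0, the set {g ∈ Γ_x : d_Y(g·y, y) ≤ r} is finite). -/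
/-!
The orbit map `g ↦ g • x` sends the elements of small joint displacement into a ball of `X`,
which is finite because `X` is connected and locally finite. The fibre over a vertex `h • x`
is contained in the coset `h Γₓ`, and translating it back by `h⁻¹` only enlarges the
displacement on `Y` by `d(y, h • y)`, so each fibre is finite when `Γₓ` acts properly on `Y`.
Moving the base vertex from `x` to `x'` changes displacements in `X` by at most `2 d(x, x')`.
-/

namespace SimpleGraph

variable {V W : Type*} {G : SimpleGraph V} {G' : SimpleGraph W}

lemma Hom.edist_map_le (f : G →g G') (u v : V) : G'.edist (f u) (f v) ≤ G.edist u v := by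
  rw [edist_eq_sInf]
  refine le_sInf ?_
  rintro _ ⟨p, rfl⟩
  exact (edist_le (p.map f)).trans_eq (by simp)

lemma Iso.edist_map (f : G ≃g G') (u v : V) : G'.edist (f u) (f v) = G.edist u v :=
  le_antisymm (Hom.edist_map_le f.toHom u v)
    (by simpa using Hom.edist_map_le f.symm.toHom (f u) (f v))

lemma Iso.dist_map (f : G ≃g G') (u v : V) : G'.dist (f u) (f v) = G.dist u v :=
  congrArg ENat.toNat (Iso.edist_map f u v)

lemma dist_smul {Γ : Type*} [Group Γ] [MulAction Γ V]
    (hG : ∀ (γ : Γ) (u v : V), G.Adj (γ • u) (γ • v) ↔ G.Adj u v) (γ : Γ) (u v : V) :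
    G.dist (γ • u) (γ • v) = G.dist u v :=
  Iso.dist_map (⟨MulAction.toPerm γ, hG γ _ _⟩ : G ≃g G) u v

lemma Connected.finite_setOf_dist_le (hconn : G.Connected)
    (hlf : ∀ v : V, (G.neighborSet v).Finite) (x : V) (n : ℕ) :
    {v : V | G.dist v x ≤ n}.Finite := by
  induction n with
  | zero => simp [hconn.dist_eq_zero_iff]
  | succ n ih =>
    refine (ih.union (ih.biUnion fun u _ => hlf u)).subset
      fun v (hv : G.dist v x ≤ n + 1) => ?_
    obtain ⟨p, hp⟩ := hconn.exists_walk_length_eq_dist v x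
    cases p with
    | nil => exact Or.inl (by simp)
    | @cons _ u _ hadj q =>
      have hq : q.length ≤ n := by simp only [Walk.length_cons] at hp; omega
      exact Or.inr (Set.mem_biUnion (x := u) ((dist_le q).trans hq) hadj.symm)

lemma Connected.dist_smul_le {Γ : Type*} [Group Γ] [MulAction Γ V] (hconn : G.Connected)
    (hG : ∀ (γ : Γ) (u v : V), G.Adj (γ • u) (γ • v) ↔ G.Adj u v) (g : Γ) (x x' : V) :
    G.dist (g • x) x ≤ G.dist (g • x') x' + 2 * G.dist x x' := by
  have h₁ : G.dist (g • x) x ≤ G.dist (g • x) (g • x') + G.dist (g • x') x :=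
    hconn.dist_triangle
  have h₂ : G.dist (g • x') x ≤ G.dist (g • x') x' + G.dist x' x := hconn.dist_triangle
  rw [dist_smul hG] at h₁
  rw [dist_comm (u := x')] at h₂
  omega

end SimpleGraph

section ProperAction

variable {Γ V Y : Type*} [Group Γ] [MulAction Γ V]
  [PseudoMetricSpace Y] [MulAction Γ Y] [IsIsometricSMul Γ Y]

lemma finite_setOf_smul_eq_and_dist_le {x : V}
    (hx : ∀ (y : Y) (r : ℝ), 0 < r → {g : Γ | g • x = x ∧ dist (g • y) y ≤ r}.Finite)
    (v : V) (y : Y) (R : ℝ) : {g : Γ | g • x = v ∧ dist (g • y) y ≤ R}.Finite := by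
  by_cases hv : ∃ h : Γ, h • x = v
  · obtain ⟨h, rfl⟩ := hv
    refine ((hx y (|R| + dist y (h • y) + 1) (by positivity)).preimage
      (mul_right_injective h⁻¹).injOn).subset ?_
    rintro g ⟨hgx, hgy⟩
    refine ⟨by rw [mul_smul, hgx, inv_smul_smul], ?_⟩
    calc dist ((h⁻¹ * g) • y) y = dist (g • y) (h • y) := by
          rw [← dist_smul h, mul_smul, smul_inv_smul]
      _ ≤ dist (g • y) y + dist y (h • y) := dist_triangle _ _ _
      _ ≤ |R| + dist y (h • y) + 1 := by linarith [le_abs_self R]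
  · exact Set.finite_empty.subset fun g hg => hv ⟨g, hg.1⟩

lemma finite_setOf_dist_smul_add_dist_smul_le {G : SimpleGraph V} (hconn : G.Connected)
    (hlf : ∀ v : V, (G.neighborSet v).Finite) {x : V}
    (hx : ∀ (y : Y) (r : ℝ), 0 < r → {g : Γ | g • x = x ∧ dist (g • y) y ≤ r}.Finite)
    (y : Y) (R : ℝ) : {g : Γ | (G.dist (g • x) x : ℝ) + dist (g • y) y ≤ R}.Finite := by
  refine ((hconn.finite_setOf_dist_le hlf x ⌈R⌉₊).biUnion fun v _ =>
    finite_setOf_smul_eq_and_dist_le hx v y R).subset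
    fun g (hg : (G.dist (g • x) x : ℝ) + dist (g • y) y ≤ R) => ?_
  have hgy : dist (g • y) y ≤ R := by
    linarith [(Nat.cast_nonneg _ : (0 : ℝ) ≤ G.dist (g • x) x)]
  have hgx : (G.dist (g • x) x : ℝ) ≤ R := by linarith [dist_nonneg (x := g • y) (y := y)]
  have hball : G.dist (g • x) x ≤ ⌈R⌉₊ := by exact_mod_cast hgx.trans (Nat.le_ceil R)
  exact Set.mem_biUnion hball ⟨rfl, hgy⟩

end ProperAction

theorem statement10 (V : Type*) (G : SimpleGraph V) (hconn : G.Connected)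
    (hlf : ∀ v : V, (G.neighborSet v).Finite)
    (Γ : Type*) [Group Γ] [MulAction Γ V]
    (hgraph : ∀ (γ : Γ) (u v : V), G.Adj (γ • u) (γ • v) ↔ G.Adj u v)
    (Y : Type*) [MetricSpace Y] [MulAction Γ Y]
    (hiso : ∀ (γ : Γ) (y y' : Y), dist (γ • y) (γ • y') = dist y y') :
    (∀ (x : V) (y : Y) (r : ℝ), 0 < r →
        {g : Γ | (G.dist (g • x) x : ℝ) + dist (g • y) y ≤ r}.Finite) ↔
    ∃ x : V, ∀ (y : Y) (r : ℝ), 0 < r →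
        {g : Γ | g • x = x ∧ dist (g • y) y ≤ r}.Finite := by
  have : IsIsometricSMul Γ Y := ⟨fun γ => Isometry.of_dist_eq (hiso γ)⟩
  constructor
  · intro hproper
    obtain ⟨x⟩ := hconn.nonempty
    refine ⟨x, fun y r hr => (hproper x y r hr).subset ?_⟩
    rintro g ⟨hgx, hgy⟩
    simpa [hgx] using hgy
  · rintro ⟨x, hx⟩ x' y r -
    refine (finite_setOf_dist_smul_add_dist_smul_le hconn hlf hx y
      (r + 2 * G.dist x x')).subset
      fun g (hg : (G.dist (g • x') x' : ℝ) + dist (g • y) y ≤ r) => ?_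
    have hbase : (G.dist (g • x) x : ℝ) ≤ G.dist (g • x') x' + 2 * G.dist x x' := by
      exact_mod_cast hconn.dist_smul_le hgraph g x x'
    show (G.dist (g • x) x : ℝ) + dist (g • y) y ≤ r + 2 * G.dist x x'
    linarith
end

section
/- Let n ≥ 1 and let A ∈ GL_n(ℝ). Then the cyclic subgroup {A^k : k ∈ ℤ} of GL_n(ℝ) is either relatively compact (its closure in GL_n(ℝ) is compact) or closed and discrete in GL_n(ℝ). -/
/-!
This is Weil's lemma, and it holds in every locally compact group. If `k ↦ A ^ k` leaves every
compact set along the cofinite filter, its range meets each compact set in finitely many points,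
so it is closed and discrete. Otherwise some compact set contains infinitely many powers; near a
cluster point of those, quotients of two of them give powers `A ^ m` with `m` arbitrarily large
and arbitrarily close to `1`. Hence both the forward and the backward orbit are dense in the
closure `H` of the cyclic group. Fix a compact neighbourhood `U` of `1`. Compactness of `H ∩ U`
gives `N` such that every `u ∈ H ∩ U` has `A ^ (-j) * u ∈ U` for some `1 ≤ j ≤ N`, so for
`x ∈ H` the least `k ≥ 0` with `A ^ k / x ∈ U` satisfies `k ≤ N`. Thus `H` lies in the compact
set `⋃_{0 ≤ k ≤ N} U⁻¹ * A ^ k`.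
-/

open Filter Topology Set

instance Matrix.locallyCompactSpace {m n R : Type*} [Finite m] [Finite n] [TopologicalSpace R]
    [LocallyCompactSpace R] : LocallyCompactSpace (Matrix m n R) :=
  inferInstanceAs (LocallyCompactSpace (m → n → R))

section TendstoCocompact

variable {ι X : Type*} [TopologicalSpace X] [T1Space X] [WeaklyLocallyCompactSpace X]
  {f : ι → X}

theorem isClosed_range_of_tendsto_cofinite_cocompact (hf : Tendsto f cofinite (cocompact X)) :
    IsClosed (range f) := by
  rw [← iUnion_singleton_eq_range]
  refine LocallyFinite.isClosed_iUnion (fun x => ?_) fun _ => isClosed_singleton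
  obtain ⟨K, hK, hKx⟩ := exists_compact_mem_nhds x
  exact ⟨K, hKx, by simpa [preimage] using tendsto_cofinite_cocompact_iff.mp hf K hK⟩

theorem discreteTopology_range_of_tendsto_cofinite_cocompact
    (hf : Tendsto f cofinite (cocompact X)) : DiscreteTopology (range f) := by
  refine continuous_subtype_val.discrete_of_tendsto_cofinite_cocompact
    (tendsto_cofinite_cocompact_iff.mpr fun K hK => ?_)
  refine ((tendsto_cofinite_cocompact_iff.mp hf K hK).image (rangeFactorization f)).subset ?_
  rintro ⟨-, i, rfl⟩ hi
  exact ⟨i, hi, rfl⟩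

end TendstoCocompact

section Weil

variable {G : Type*} [Group G] [TopologicalSpace G] [IsTopologicalGroup G] {g : G}

theorem mapClusterPt_one_pow_of_frequently_zpow_mem {K : Set G} (hK : IsCompact K)
    (hgK : ∃ᶠ k : ℤ in cofinite, g ^ k ∈ K) : MapClusterPt 1 atTop (g ^ · : ℕ → G) := by
  have : (cofinite ⊓ 𝓟 {k : ℤ | g ^ k ∈ K}).NeBot := frequently_iff_neBot.mp hgK
  obtain ⟨x, -, hx⟩ := hK.exists_mapClusterPt (f := cofinite ⊓ 𝓟 {k : ℤ | g ^ k ∈ K})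
    (u := (g ^ · : ℤ → G)) (tendsto_principal.mpr (mem_inf_of_right (mem_principal_self _)))
  refine mapClusterPt_iff_frequently.mpr fun W hW => ?_
  obtain ⟨V, hV, hVW⟩ := exists_nhds_split_inv hW
  have hxV : (· * x⁻¹) ⁻¹' V ∈ 𝓝 x :=
    (continuous_mul_const x⁻¹).continuousAt.preimage_mem_nhds (by simpa using hV)
  set T := {k : ℤ | g ^ k * x⁻¹ ∈ V}
  have hT : T.Infinite := frequently_cofinite_iff_infinite.mp
    ((mapClusterPt_iff_frequently.mp hx _ hxV).filter_mono inf_le_left)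
  have hTW : ∀ a ∈ T, ∀ b ∈ T, g ^ (b - a) ∈ W := fun a ha b hb => by
    simpa [zpow_sub, div_eq_mul_inv, mul_assoc] using hVW _ hb _ ha
  obtain ⟨a, ha⟩ := hT.nonempty
  refine frequently_atTop.mpr fun M => ?_
  obtain ⟨b, hb, hbM⟩ := (hT.sdiff (finite_Icc (a - M) (a + M))).nonempty
  refine ⟨(b - a).natAbs, by simp only [mem_Icc, not_and_or, not_le] at hbM; omega, ?_⟩
  rcases Int.natAbs_eq (b - a) with h | h
  · rw [← zpow_natCast, ← h]
    exact hTW a ha b hb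
  · rw [← zpow_natCast, show ((b - a).natAbs : ℤ) = a - b by omega]
    exact hTW b hb a ha

theorem topologicalClosure_zpowers_subset_closure_image_Ici
    (hg : MapClusterPt 1 atTop (g ^ · : ℕ → G)) (N : ℤ) :
    ((Subgroup.zpowers g).topologicalClosure : Set G) ⊆ closure ((g ^ · : ℤ → G) '' Ici N) := by
  refine closure_minimal ?_ isClosed_closure
  rintro - ⟨j, rfl⟩
  refine mem_closure_iff_nhds.mpr fun V hV => ?_
  have hW : (g ^ j * ·) ⁻¹' V ∈ 𝓝 (1 : G) :=
    (continuous_const_mul _).continuousAt.preimage_mem_nhds (by simpa using hV)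
  obtain ⟨m, hm, hmV⟩ := frequently_atTop.mp (mapClusterPt_iff_frequently.mp hg _ hW) (N - j).toNat
  refine ⟨g ^ (j + m), by rwa [zpow_add, zpow_natCast], j + m, ?_, rfl⟩
  simp only [mem_Ici]
  omega

theorem exists_zpow_div_mem_of_mapClusterPt_one (hg : MapClusterPt 1 atTop (g ^ · : ℕ → G))
    {U : Set G} (hU : IsCompact U) (hU1 : U ∈ 𝓝 1) :
    ∃ N : ℤ, ∀ x ∈ (Subgroup.zpowers g).topologicalClosure, ∃ k ∈ Icc 0 N, g ^ k / x ∈ U := by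
  set H := (Subgroup.zpowers g).topologicalClosure
  have hg' : MapClusterPt 1 atTop (g⁻¹ ^ · : ℕ → G) := by
    simpa [Function.comp_def, inv_pow] using hg.continuousAt_comp continuous_inv.continuousAt
  obtain ⟨N, hN⟩ : ∃ N : ℤ, ∀ u ∈ (H : Set G) ∩ U, ∃ j ∈ Icc 1 N, g ^ (-j) * u ∈ U := by
    have hcover : (H : Set G) ∩ U ⊆ ⋃ j ∈ Ici (1 : ℤ), (g ^ (-j) * ·) ⁻¹' interior U := by
      rintro u ⟨hu, -⟩
      have hu' : u⁻¹ ∈ closure ((g⁻¹ ^ · : ℤ → G) '' Ici 1) :=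
        topologicalClosure_zpowers_subset_closure_image_Ici hg' 1
          (by rw [Subgroup.zpowers_inv]; exact H.inv_mem hu)
      obtain ⟨-, ⟨j, hj, rfl⟩, hjU⟩ :=
        mem_closure_iff_nhds_one.mp hu' _ (interior_mem_nhds.mpr hU1)
      exact mem_biUnion hj (by simpa [inv_zpow'] using hjU)
    obtain ⟨J, hJ1, hJ, hcov⟩ :=
      (hU.inter_left (Subgroup.zpowers g).isClosed_topologicalClosure).elim_finite_subcover_image
        (fun j _ => isOpen_interior.preimage (continuous_const_mul _)) hcover
    obtain ⟨N, hN⟩ := hJ.bddAbove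
    refine ⟨N, fun u hu => ?_⟩
    obtain ⟨j, hj, hju⟩ := mem_iUnion₂.mp (hcov hu)
    exact ⟨j, ⟨hJ1 hj, hN hj⟩, interior_subset hju⟩
  refine ⟨N, fun x hx => ?_⟩
  obtain ⟨-, ⟨k, hk0, rfl⟩, hk⟩ := mem_closure_iff_nhds_one.mp
    (topologicalClosure_zpowers_subset_closure_image_Ici hg 0 hx) U hU1
  obtain ⟨k₀, ⟨hk₀0, hk₀⟩, hmin⟩ := Int.exists_least_of_bdd
    (P := fun k => 0 ≤ k ∧ g ^ k / x ∈ U) ⟨0, fun _ h => h.1⟩ ⟨k, hk0, hk⟩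
  refine ⟨k₀, ⟨hk₀0, not_lt.mp fun hNk₀ => ?_⟩, hk₀⟩
  have hu : g ^ k₀ / x ∈ H :=
    H.div_mem ((Subgroup.zpowers g).le_topologicalClosure (Subgroup.zpow_mem_zpowers g k₀)) hx
  obtain ⟨j, ⟨hj1, hjN⟩, hju⟩ := hN _ ⟨hu, hk₀⟩
  have := hmin (k₀ - j) ⟨by omega, by rwa [sub_eq_neg_add, zpow_add, mul_div_assoc]⟩
  omega

theorem isCompact_topologicalClosure_zpowers [WeaklyLocallyCompactSpace G]
    (hg : ¬Tendsto (g ^ · : ℤ → G) cofinite (cocompact G)) :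
    IsCompact ((Subgroup.zpowers g).topologicalClosure : Set G) := by
  obtain ⟨K, hK, hgK⟩ : ∃ K, IsCompact K ∧ ∃ᶠ k : ℤ in cofinite, g ^ k ∈ K := by
    simp only [tendsto_cofinite_cocompact_iff, not_forall] at hg
    obtain ⟨K, hK, hKinf⟩ := hg
    exact ⟨K, hK, frequently_cofinite_iff_infinite.mpr hKinf⟩
  obtain ⟨U, hU, hU1⟩ := exists_compact_mem_nhds (1 : G)
  obtain ⟨N, hN⟩ :=
    exists_zpow_div_mem_of_mapClusterPt_one (mapClusterPt_one_pow_of_frequently_zpow_mem hK hgK)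
      hU hU1
  refine ((finite_Icc 0 N).isCompact_biUnion fun k _ =>
    hU.image (by fun_prop : Continuous fun u : G => u⁻¹ * g ^ k)).of_isClosed_subset
    (Subgroup.zpowers g).isClosed_topologicalClosure fun x hx => ?_
  obtain ⟨k, hk, hkx⟩ := hN x hx
  exact mem_biUnion hk ⟨g ^ k / x, hkx, by simp only [inv_div, div_mul_cancel]⟩

end Weil

theorem statement11_general (n : ℕ) (A : GL (Fin n) ℝ) :
    IsCompact (closure (Set.range fun k : ℤ => A ^ k)) ∨
    (IsClosed (Set.range fun k : ℤ => A ^ k) ∧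
      DiscreteTopology (Set.range fun k : ℤ => A ^ k)) := by
  by_cases h : Tendsto (fun k : ℤ => A ^ k) cofinite (cocompact (GL (Fin n) ℝ))
  · exact .inr ⟨isClosed_range_of_tendsto_cofinite_cocompact h,
      discreteTopology_range_of_tendsto_cofinite_cocompact h⟩
  · rw [← Subgroup.coe_zpowers, ← Subgroup.topologicalClosure_coe]
    exact .inl (isCompact_topologicalClosure_zpowers h)

theorem statement11 (n : ℕ) (hn : 1 ≤ n) (A : GL (Fin n) ℝ) :
    IsCompact (closure (Set.range fun k : ℤ => A ^ k)) ∨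
    (IsClosed (Set.range fun k : ℤ => A ^ k) ∧
      DiscreteTopology (Set.range fun k : ℤ => A ^ k)) :=
  statement11_general n A
end

section
/- Let n ≥ 1 and let A ∈ GL_n(ℝ). Then some positive power of A belongs to a one-parameter subgroup of GL_n(ℝ): there exist a positive integer k and a real n×n matrix X such that exp(X) = A^k (in fact k = 2 works, i.e. A² is the exponential of a real matrix). -/
/-!
Squares of units are exponentials in every finite-dimensional real Banach algebra, by passing to
the commutative closed subalgebra `B` generated by the unit `u` (which is Artinian, so `u` stays a
unit there). Each residue field of `B` embeds into `ℂ`, and `u²` has a logarithm in the image of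
`B`: a real one when the residue of `u` is real, since its square is positive. The Chinese
remainder theorem glues these into one `y` with `exp y ≡ u²` modulo every maximal ideal, i.e.
modulo the nilradical. The nilpotent error is then absorbed by a logarithm of `1 + m`, `m`
nilpotent: for the truncated series `ℓ(t) = ∑ (-1)ʲ tʲ⁺¹ mʲ⁺¹ / (j + 1)` one has
`(1 + t m) ℓ'(t) = m`, so `exp (-ℓ t) * (1 + t m)` is constant.
-/

open NormedSpace Finset

theorem exp_mul_exp_neg_real {B : Type*} [NormedCommRing B] [NormedAlgebra ℝ B] [CompleteSpace B]
    (x : B) : exp x * exp (-x) = 1 := by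
  let : NormedAlgebra ℚ B := NormedAlgebra.restrictScalars ℚ ℝ B
  rw [← exp_add, add_neg_cancel, exp_zero]

theorem hasDerivAt_truncated_log {B : Type*} [NormedRing B] [NormedAlgebra ℝ B] (m : B) (N : ℕ)
    (t : ℝ) :
    HasDerivAt (fun s : ℝ ↦ ∑ j ∈ range N, ((-1) ^ j / (j + 1) * s ^ (j + 1)) • m ^ (j + 1))
      (m * ∑ j ∈ range N, (-(t • m)) ^ j) t := by
  refine (HasDerivAt.fun_sum fun j _ ↦
    ((hasDerivAt_pow (j + 1) t).const_mul ((-1) ^ j / (j + 1) : ℝ)).smul_const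
      (m ^ (j + 1))).congr_deriv ?_
  rw [mul_sum]
  refine sum_congr rfl fun j _ ↦ ?_
  rw [← neg_smul, smul_pow, mul_smul_comm, ← pow_succ', neg_pow t]
  congr 1
  push_cast
  field_simp

theorem exists_exp_eq_one_add_of_isNilpotent {B : Type*} [NormedCommRing B] [NormedAlgebra ℝ B]
    [CompleteSpace B] {m : B} (hm : IsNilpotent m) :
    ∃ L : B, exp L = 1 + m := by
  obtain ⟨N, hN⟩ := hm
  set ℓ : ℝ → B := fun s ↦ ∑ j ∈ range N, ((-1) ^ j / (j + 1) * s ^ (j + 1)) • m ^ (j + 1)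
  set F : ℝ → B := fun s ↦ exp (-ℓ s) * (1 + s • m)
  have hF : ∀ t, HasDerivAt F 0 t := by
    intro t
    have key : (1 + t • m) * (m * ∑ j ∈ range N, (-(t • m)) ^ j) = m := by
      rw [mul_left_comm, ← sub_neg_eq_add, mul_neg_geom_sum, neg_pow, smul_pow, hN]
      simp
    refine (((hasFDerivAt_exp (𝕂 := ℝ)).comp_hasDerivAt t
      (hasDerivAt_truncated_log m N t).neg).mul
      (((hasDerivAt_id t).smul_const m).const_add 1)).congr_deriv ?_
    simp only [Pi.neg_apply, smul_apply, one_apply_eq_self, smul_eq_mul, id_eq, one_smul]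
    linear_combination (-exp (-ℓ t)) * key
  have hF1 : F 1 = F 0 := is_const_of_deriv_eq_zero (fun t ↦ (hF t).differentiableAt)
    (fun t ↦ (hF t).deriv) 1 0
  refine ⟨ℓ 1, ?_⟩
  simpa [F, ℓ, ← mul_assoc, exp_mul_exp_neg_real] using (congrArg (exp (ℓ 1) * ·) hF1).symm

theorem Complex.I_mem_of_im_ne_zero {K : Subalgebra ℝ ℂ} {w : ℂ} (hw : w ∈ K) (him : w.im ≠ 0) :
    I ∈ K := by
  have : I = (w.im⁻¹ : ℝ) • (w - (w.re : ℝ)) := by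
    apply Complex.ext <;> simp [him]
  rw [this]
  exact K.smul_mem (K.sub_mem hw (K.algebraMap_mem _)) _

theorem Complex.exists_mem_subalgebra_exp_eq_sq (K : Subalgebra ℝ ℂ) {w : ℂ} (hw : w ∈ K)
    (h0 : w ≠ 0) : ∃ c ∈ K, Complex.exp c = w ^ 2 := by
  by_cases him : w.im = 0
  · have hw : w = (w.re : ℂ) := Complex.ext rfl (by simp [him])
    refine ⟨(Real.log (w.re ^ 2) : ℝ), K.algebraMap_mem _, ?_⟩
    have : w.re ≠ 0 := fun h ↦ h0 (by rw [hw, h, ofReal_zero])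
    rw [← ofReal_exp, Real.exp_log (by positivity), hw]
    norm_cast
  · refine ⟨log (w ^ 2), ?_, exp_log (pow_ne_zero 2 h0)⟩
    rw [← re_add_im (log (w ^ 2))]
    exact K.add_mem (K.algebraMap_mem _)
      (K.mul_mem (K.algebraMap_mem _) (I_mem_of_im_ne_zero hw him))

theorem exists_algHom_complex_ker_eq {B : Type*} [CommRing B] [Algebra ℝ B] [Module.Finite ℝ B]
    (I : Ideal B) [I.IsMaximal] : ∃ ψ : B →ₐ[ℝ] ℂ, RingHom.ker ψ = I := by
  let : Field (B ⧸ I) := Ideal.Quotient.field I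
  have : Algebra.IsAlgebraic ℝ (B ⧸ I) := Algebra.IsAlgebraic.of_finite ℝ _
  let χ : (B ⧸ I) →ₐ[ℝ] ℂ := IsAlgClosed.lift
  refine ⟨χ.comp (Ideal.Quotient.mkₐ ℝ I), ?_⟩
  exact (RingHom.ker_comp_of_injective (Ideal.Quotient.mk I) χ.toRingHom.injective).trans
    Ideal.mk_ker

theorem exists_exp_sub_sq_mem_of_isMaximal {B : Type*} [NormedCommRing B] [NormedAlgebra ℝ B]
    [FiniteDimensional ℝ B] {u : B} (hu : IsUnit u) (I : Ideal B) [I.IsMaximal] :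
    ∃ y : B, ∀ z, z - y ∈ I → exp z - u ^ 2 ∈ I := by
  let : NormedAlgebra ℚ B := .restrictScalars ℚ ℝ B
  have : CompleteSpace B := FiniteDimensional.complete ℝ B
  obtain ⟨ψ, rfl⟩ := exists_algHom_complex_ker_eq I
  have hψ : Continuous ψ := ψ.toLinearMap.continuous_of_finiteDimensional
  obtain ⟨c, ⟨y, rfl⟩, hc⟩ :=
    Complex.exists_mem_subalgebra_exp_eq_sq ψ.range ⟨u, rfl⟩ (hu.map ψ).ne_zero
  refine ⟨y, fun z hz ↦ ?_⟩
  rw [RingHom.mem_ker, map_sub] at hz ⊢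
  rw [map_exp ψ hψ, sub_eq_zero.mp hz, ← Complex.exp_eq_exp_ℂ]
  exact sub_eq_zero.mpr (hc.trans (map_pow ψ u 2).symm)

theorem IsUnit.exists_exp_eq_sq_of_commRing {B : Type*} [NormedCommRing B] [NormedAlgebra ℝ B]
    [FiniteDimensional ℝ B] {u : B} (hu : IsUnit u) : ∃ y : B, exp y = u ^ 2 := by
  let : NormedAlgebra ℚ B := .restrictScalars ℚ ℝ B
  have : CompleteSpace B := FiniteDimensional.complete ℝ B
  have : IsArtinianRing B := .of_finite ℝ B
  choose y hy using fun I : MaximalSpectrum B ↦ exists_exp_sub_sq_mem_of_isMaximal hu I.asIdeal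
  obtain ⟨z, hz⟩ := Ideal.exists_forall_sub_mem_ideal (fun I J h ↦ I.isCoprime_of_ne h) y
  have hnil : IsNilpotent (exp z - u ^ 2) := by
    rw [← mem_nilradical, IsArtinianRing.nilradical_eq_iInf, Ideal.mem_iInf]
    exact fun I ↦ hy I z (hz I)
  obtain ⟨L, hL⟩ := exists_exp_eq_one_add_of_isNilpotent
    ((Commute.all (-exp (-z)) _).isNilpotent_mul_left hnil)
  refine ⟨z + L, ?_⟩
  rw [exp_add, hL]
  linear_combination (u ^ 2 - exp z) * exp_mul_exp_neg_real z

theorem IsUnit.exists_exp_eq_sq {A : Type*} [NormedRing A] [NormedAlgebra ℝ A]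
    [FiniteDimensional ℝ A] {a : A} (ha : IsUnit a) : ∃ y : A, exp y = a ^ 2 := by
  let B := Algebra.elemental ℝ a
  let : NormedCommRing B := { SubringClass.toNormedRing B with mul_comm := mul_comm }
  let : NormedAlgebra ℚ A := .restrictScalars ℚ ℝ A
  let : NormedAlgebra ℚ B := .restrictScalars ℚ ℝ B
  have : CompleteSpace B := FiniteDimensional.complete ℝ B
  have : IsArtinianRing B := .of_finite ℝ B
  have hb : IsUnit (⟨a, Algebra.elemental.self_mem ℝ a⟩ : B) :=
    IsArtinianRing.isUnit_of_mem_nonZeroDivisors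
      (comap_nonZeroDivisors_le_of_injective (f := B.val) Subtype.val_injective
        ha.mem_nonZeroDivisors)
  obtain ⟨y, hy⟩ := hb.exists_exp_eq_sq_of_commRing
  exact ⟨y, by simpa [hy] using (map_exp B.val continuous_subtype_val y).symm⟩

theorem statement12_general (n : ℕ) (A : GL (Fin n) ℝ) :
    (∃ (k : ℕ) (X : Matrix (Fin n) (Fin n) ℝ), 0 < k ∧
        NormedSpace.exp X = (A : Matrix (Fin n) (Fin n) ℝ) ^ k) ∧
    ∃ X : Matrix (Fin n) (Fin n) ℝ,
      NormedSpace.exp X = (A : Matrix (Fin n) (Fin n) ℝ) ^ 2 := by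
  let : NormedRing (Matrix (Fin n) (Fin n) ℝ) := Matrix.linftyOpNormedRing
  let : NormedAlgebra ℝ (Matrix (Fin n) (Fin n) ℝ) := Matrix.linftyOpNormedAlgebra
  obtain ⟨X, hX⟩ := A.isUnit.exists_exp_eq_sq
  exact ⟨⟨2, X, two_pos, hX⟩, X, hX⟩

theorem statement12 (n : ℕ) (hn : 1 ≤ n) (A : GL (Fin n) ℝ) :
    (∃ (k : ℕ) (X : Matrix (Fin n) (Fin n) ℝ), 0 < k ∧
        NormedSpace.exp X = (A : Matrix (Fin n) (Fin n) ℝ) ^ k) ∧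
    ∃ X : Matrix (Fin n) (Fin n) ℝ,
      NormedSpace.exp X = (A : Matrix (Fin n) (Fin n) ℝ) ^ 2 :=
  statement12_general n A
end
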